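/- arXiv:2508.04991 — 2 statements merged into one kernel-verified Lean document; each statement's English description precedes it below -/
import Mathlib

section
/- Let K ⊆ ℝⁿ be a nonempty closed set, f = (f_1,…,f_q) a vector polynomial, x̄ ∈ K, and λ ∈ ℝ^q with λ_i ≥ 0 for all i and λ ≠ 0. If there exists a closed set S ⊆ ℝⁿ with (K_x̄)_∞ ⊆ S_∞ ⊆ K_∞ such that at least one of the following holds: (i) SOL(S_∞, (Σ_{i=1}^q λ_i f_i)^∞) = {0}; (ii) SOL^s(S_∞, f^∞) = {0}; (iii) SOL^w(S_∞, f^∞) = {0}, then SOL^s(K, f) is nonempty, i.e., the polynomial vector optimization problem of minimizing f over K admits a Pareto efficient solution. -/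
/-!
If the sublevel set `K_x̄` were unbounded, normalising an escaping sequence `x_k ∈ K_x̄` by
`t_k = ‖x_k‖` would give a unit vector `v ∈ (K_x̄)_∞ ⊆ S_∞`. Dividing `f_i(x_k) ≤ f_i(x̄)` by
`t_k ^ deg f_i` and letting `k → ∞` gives `f_i^∞(v) ≤ f_i^∞(0)`, and likewise for
`Σ λ_i f_i`. So `v` is at least as good as `0` for each of the three recession problems on `S_∞`,
whence it also solves the problem whose only solution is `0`: a contradiction. Thus `K_x̄` is
compact, and a minimiser of `Σ f_i` on it is Pareto efficient on `K`.
-/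

open Filter Topology MvPolynomial Bornology

noncomputable section

/-- The asymptotic (recession) cone of a set `A ⊆ ℝⁿ`. -/
def asymCone {n : ℕ} (A : Set (Fin n → ℝ)) : Set (Fin n → ℝ) :=
  {v | ∃ (t : ℕ → ℝ) (x : ℕ → (Fin n → ℝ)),
    Filter.Tendsto t Filter.atTop Filter.atTop ∧ (∀ k, x k ∈ A) ∧
    Filter.Tendsto (fun k => (t k)⁻¹ • x k) Filter.atTop (nhds v)}

/-- Pareto efficient solutions of the vector map `g` on `C`. -/
def SOLs {n q : ℕ} (C : Set (Fin n → ℝ)) (g : Fin q → (Fin n → ℝ) → ℝ) :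
    Set (Fin n → ℝ) :=
  {x | x ∈ C ∧ ¬ ∃ y ∈ C, (∀ i, g i y ≤ g i x) ∧ (∃ i, g i y ≠ g i x)}

/-- Weak Pareto efficient solutions of the vector map `g` on `C`. -/
def SOLw {n q : ℕ} (C : Set (Fin n → ℝ)) (g : Fin q → (Fin n → ℝ) → ℝ) :
    Set (Fin n → ℝ) :=
  {x | x ∈ C ∧ ¬ ∃ y ∈ C, ∀ i, g i y < g i x}

/-- Global minimizers of a scalar function `p` on `C`. -/
def SOLmin {n : ℕ} (C : Set (Fin n → ℝ)) (p : (Fin n → ℝ) → ℝ) :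
    Set (Fin n → ℝ) :=
  {x | x ∈ C ∧ ∀ y ∈ C, p x ≤ p y}

/-- The recession polynomial (leading term: top-degree homogeneous part) of a
polynomial, as a function on `ℝⁿ`. -/
noncomputable def recPoly {n : ℕ} (p : MvPolynomial (Fin n) ℝ) : (Fin n → ℝ) → ℝ :=
  fun x => MvPolynomial.eval x (MvPolynomial.homogeneousComponent p.totalDegree p)

section Solutions

variable {n q : ℕ} {C : Set (Fin n → ℝ)} {x y : Fin n → ℝ}

lemma mem_SOLmin_of_le {p : (Fin n → ℝ) → ℝ} (hx : x ∈ SOLmin C p) (hy : y ∈ C)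
    (h : p y ≤ p x) : y ∈ SOLmin C p :=
  ⟨hy, fun z hz => h.trans (hx.2 z hz)⟩

lemma mem_SOLs_of_le {g : Fin q → (Fin n → ℝ) → ℝ} (hx : x ∈ SOLs C g) (hy : y ∈ C)
    (h : ∀ i, g i y ≤ g i x) : y ∈ SOLs C g := by
  have heq : ∀ i, g i y = g i x := by
    by_contra! hne
    exact hx.2 ⟨y, hy, h, hne⟩
  refine ⟨hy, fun ⟨z, hz, hle, i, hne⟩ => hx.2 ⟨z, hz, fun j => ?_, i, ?_⟩⟩
  · exact (hle j).trans_eq (heq j)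
  · rwa [← heq i]

lemma mem_SOLw_of_le {g : Fin q → (Fin n → ℝ) → ℝ} (hx : x ∈ SOLw C g) (hy : y ∈ C)
    (h : ∀ i, g i y ≤ g i x) : y ∈ SOLw C g :=
  ⟨hy, fun ⟨z, hz, hlt⟩ => hx.2 ⟨z, hz, fun i => (hlt i).trans_le (h i)⟩⟩

lemma SOLs_nonempty_of_isCompact_sublevel {K : Set (Fin n → ℝ)} {g : Fin q → (Fin n → ℝ) → ℝ}
    (hg : ∀ i, Continuous (g i)) {xbar : Fin n → ℝ} (hx : xbar ∈ K)
    (hcpt : IsCompact {x ∈ K | ∀ j, g j x ≤ g j xbar}) : (SOLs K g).Nonempty := by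
  obtain ⟨z, ⟨hzK, hz_le⟩, hz_min⟩ := hcpt.exists_isMinOn ⟨xbar, hx, fun _ => le_rfl⟩
    (continuous_finsetSum Finset.univ fun i _ => hg i).continuousOn
  refine ⟨z, hzK, fun ⟨y, hyK, hle, i, hne⟩ => ?_⟩
  have hy : y ∈ {x ∈ K | ∀ j, g j x ≤ g j xbar} := ⟨hyK, fun j => (hle j).trans (hz_le j)⟩
  have hlt : ∑ j, g j y < ∑ j, g j z :=
    Finset.sum_lt_sum (fun j _ => hle j) ⟨i, Finset.mem_univ i, (hle i).lt_of_ne hne⟩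
  exact (hz_min hy).not_gt hlt

end Solutions

lemma exists_ne_zero_mem_asymCone_of_not_isBounded {n : ℕ} {A : Set (Fin n → ℝ)}
    (hA : ¬ IsBounded A) : ∃ v ≠ 0, v ∈ asymCone A := by
  simp only [isBounded_iff_forall_norm_le, not_exists, not_forall, not_le] at hA
  choose x hxA hx_norm using fun k : ℕ => hA k
  have hx_pos : ∀ k, 0 < ‖x k‖ := fun k => (Nat.cast_nonneg k).trans_lt (hx_norm k)
  have hsphere : ∀ k, ‖x k‖⁻¹ • x k ∈ Metric.sphere (0 : Fin n → ℝ) 1 := fun k => by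
    rw [mem_sphere_zero_iff_norm, norm_smul, norm_inv, norm_norm, inv_mul_cancel₀ (hx_pos k).ne']
  obtain ⟨v, hv, φ, hφ, hlim⟩ := (isCompact_sphere (0 : Fin n → ℝ) 1).tendsto_subseq hsphere
  have ht : Tendsto (fun k => ‖x (φ k)‖) atTop atTop :=
    tendsto_atTop_mono (fun k => (Nat.cast_le.mpr (hφ.id_le k)).trans (hx_norm (φ k)).le)
      tendsto_natCast_atTop_atTop
  refine ⟨v, ne_zero_of_mem_unit_sphere ⟨v, hv⟩, ?_⟩
  exact ⟨_, _, ht, fun k => hxA (φ k), hlim⟩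

lemma MvPolynomial.IsHomogeneous.eval_smul {σ R : Type*} [CommSemiring R]
    {p : MvPolynomial σ R} {m : ℕ} (hp : p.IsHomogeneous m) (c : R) (x : σ → R) :
    eval (c • x) p = c ^ m * eval x p := by
  rw [eval_eq, eval_eq, Finset.mul_sum]
  refine Finset.sum_congr rfl fun d hd => ?_
  simp only [Pi.smul_apply, smul_eq_mul, mul_pow, Finset.prod_mul_distrib,
    Finset.prod_pow_eq_pow_sum, ← hp.degree_eq_sum_deg_support hd]
  ring

section RecessionPolynomial

variable {n : ℕ} (p : MvPolynomial (Fin n) ℝ)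

lemma recPoly_apply_of_totalDegree_eq_zero (hp : p.totalDegree = 0) (x : Fin n → ℝ) :
    recPoly p x = coeff 0 p := by
  simp [recPoly, hp, homogeneousComponent_zero]

lemma recPoly_zero_of_totalDegree_ne_zero (hp : p.totalDegree ≠ 0) : recPoly p 0 = 0 := by
  have h := (homogeneousComponent_isHomogeneous p.totalDegree p).eval_smul 0 0
  rwa [smul_zero, zero_pow hp, zero_mul] at h

lemma pow_mul_eval_inv_smul {s : ℝ} (hs : s ≠ 0) (u : Fin n → ℝ) :
    s ^ p.totalDegree * eval (s⁻¹ • u) p = ∑ j ∈ Finset.range (p.totalDegree + 1),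
      s ^ (p.totalDegree - j) * eval u (homogeneousComponent j p) := by
  have hsum : eval (s⁻¹ • u) p = ∑ j ∈ Finset.range (p.totalDegree + 1),
      eval (s⁻¹ • u) (homogeneousComponent j p) := by
    rw [← map_sum, sum_homogeneousComponent]
  simp only [hsum, Finset.mul_sum, (homogeneousComponent_isHomogeneous _ p).eval_smul]
  refine Finset.sum_congr rfl fun j hj => ?_
  rw [pow_sub₀ s hs (Nat.lt_succ_iff.mp (Finset.mem_range.mp hj)), inv_pow]
  ring

lemma tendsto_inv_pow_mul_eval {t : ℕ → ℝ} {x : ℕ → Fin n → ℝ} {v : Fin n → ℝ}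
    (ht : Tendsto t atTop atTop) (hx : Tendsto (fun k => (t k)⁻¹ • x k) atTop (𝓝 v)) :
    Tendsto (fun k => ((t k) ^ p.totalDegree)⁻¹ * eval (x k) p) atTop (𝓝 (recPoly p v)) := by
  set d := p.totalDegree
  -- `G (s, u) = s ^ d * p (u / s)` for `s ≠ 0`, extended continuously by `G (0, u) = p^∞ (u)`.
  let G : ℝ × (Fin n → ℝ) → ℝ := fun z =>
    ∑ j ∈ Finset.range (d + 1), z.1 ^ (d - j) * eval z.2 (homogeneousComponent j p)
  have hG : Continuous G := continuous_finsetSum _ fun j _ =>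
    (continuous_fst.pow _).mul ((continuous_eval _).comp continuous_snd)
  have hG0 : G (0, v) = recPoly p v := by
    simp only [G]
    rw [Finset.sum_eq_single_of_mem d (Finset.self_mem_range_succ d) fun j hj hjd => by
      rw [zero_pow (by have := Finset.mem_range.mp hj; omega : d - j ≠ 0), zero_mul]]
    simp [recPoly, d]
  have hlim := hG0 ▸ (hG.tendsto (0, v)).comp (ht.inv_tendsto_atTop.prodMk_nhds hx)
  refine hlim.congr' ?_
  filter_upwards [ht.eventually_ne_atTop 0] with k hk
  calc G ((t k)⁻¹, (t k)⁻¹ • x k)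
      = (t k)⁻¹ ^ d * eval ((t k)⁻¹⁻¹ • (t k)⁻¹ • x k) p :=
        (pow_mul_eval_inv_smul p (inv_ne_zero hk) _).symm
    _ = ((t k) ^ d)⁻¹ * eval (x k) p := by
        rw [inv_inv, smul_smul, mul_inv_cancel₀ hk, one_smul, inv_pow]

lemma recPoly_le_of_mem_asymCone {A : Set (Fin n → ℝ)} {c : ℝ} (hA : ∀ x ∈ A, eval x p ≤ c)
    {v : Fin n → ℝ} (hv : v ∈ asymCone A) : recPoly p v ≤ recPoly p 0 := by
  by_cases hd : p.totalDegree = 0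
  · rw [recPoly_apply_of_totalDegree_eq_zero p hd, recPoly_apply_of_totalDegree_eq_zero p hd]
  obtain ⟨t, x, ht, hxA, hlim⟩ := hv
  have hc : Tendsto (fun k => ((t k) ^ p.totalDegree)⁻¹ * c) atTop (𝓝 0) := by
    simpa using ((tendsto_pow_atTop hd).comp ht).inv_tendsto_atTop.mul_const c
  rw [recPoly_zero_of_totalDegree_ne_zero p hd]
  refine le_of_tendsto_of_tendsto (tendsto_inv_pow_mul_eval p ht hlim) hc ?_
  filter_upwards [ht.eventually_gt_atTop 0] with k hk
  exact mul_le_mul_of_nonneg_left (hA _ (hxA k)) (by positivity)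

end RecessionPolynomial

theorem stmt13_general {n q : ℕ} (K : Set (Fin n → ℝ)) (hKcl : IsClosed K)
    (f : Fin q → MvPolynomial (Fin n) ℝ)
    (xbar : Fin n → ℝ) (hx : xbar ∈ K)
    (lam : Fin q → ℝ) (hlam : ∀ i, 0 ≤ lam i)
    (hS : ∃ S : Set (Fin n → ℝ), IsClosed S ∧
      asymCone {x ∈ K | ∀ j, eval x (f j) ≤ eval xbar (f j)} ⊆ asymCone S ∧
      asymCone S ⊆ asymCone K ∧
      (SOLmin (asymCone S) (recPoly (∑ i, MvPolynomial.C (lam i) * f i)) = {0} ∨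
       SOLs (asymCone S) (fun i => recPoly (f i)) = {0} ∨
       SOLw (asymCone S) (fun i => recPoly (f i)) = {0})) :
    (SOLs K (fun i x => eval x (f i))).Nonempty := by
  obtain ⟨S, -, hsub, -, hcase⟩ := hS
  set L := {x ∈ K | ∀ j, eval x (f j) ≤ eval xbar (f j)}
  have hLcl : IsClosed L := hKcl.inter <|
    isClosed_le (continuous_pi fun j => continuous_eval (f j)) continuous_const
  refine SOLs_nonempty_of_isCompact_sublevel (fun i => continuous_eval (f i)) hx <|
    Metric.isCompact_of_isClosed_isBounded hLcl <| by_contra fun hunb => ?_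
  obtain ⟨v, hv0, hvL⟩ := exists_ne_zero_mem_asymCone_of_not_isBounded hunb
  have hle : ∀ i, recPoly (f i) v ≤ recPoly (f i) 0 :=
    fun i => recPoly_le_of_mem_asymCone (f i) (fun x hx => hx.2 i) hvL
  have hlam_le : recPoly (∑ i, C (lam i) * f i) v ≤ recPoly (∑ i, C (lam i) * f i) 0 := by
    refine recPoly_le_of_mem_asymCone _ (c := ∑ i, lam i * eval xbar (f i)) (fun x hx => ?_) hvL
    simp only [map_sum, map_mul, eval_C]
    exact Finset.sum_le_sum fun i _ => mul_le_mul_of_nonneg_left (hx.2 i) (hlam i)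
  apply hv0
  rcases hcase with hc | hc | hc
  · simpa [hc] using mem_SOLmin_of_le (hc ▸ rfl) (hsub hvL) hlam_le
  · simpa [hc] using mem_SOLs_of_le (hc ▸ rfl) (hsub hvL) hle
  · simpa [hc] using mem_SOLw_of_le (hc ▸ rfl) (hsub hvL) hle

theorem stmt13 {n q : ℕ} (K : Set (Fin n → ℝ)) (hKne : K.Nonempty) (hKcl : IsClosed K)
    (f : Fin q → MvPolynomial (Fin n) ℝ) (hdeg : ∀ i, 1 ≤ (f i).totalDegree)
    (xbar : Fin n → ℝ) (hx : xbar ∈ K)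
    (lam : Fin q → ℝ) (hlam : ∀ i, 0 ≤ lam i) (hlam0 : lam ≠ 0)
    (hS : ∃ S : Set (Fin n → ℝ), IsClosed S ∧
      asymCone {x ∈ K | ∀ j, eval x (f j) ≤ eval xbar (f j)} ⊆ asymCone S ∧
      asymCone S ⊆ asymCone K ∧
      (SOLmin (asymCone S) (recPoly (∑ i, MvPolynomial.C (lam i) * f i)) = {0} ∨
       SOLs (asymCone S) (fun i => recPoly (f i)) = {0} ∨
       SOLw (asymCone S) (fun i => recPoly (f i)) = {0})) :
    (SOLs K (fun i x => eval x (f i))).Nonempty :=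
  stmt13_general K hKcl f xbar hx lam hlam hS
end
end

section
/- Let K ⊆ ℝⁿ be a nonempty closed set and f = (f_1,…,f_q) a vector polynomial. If there exists a closed set S ⊆ ℝⁿ with K_∞ ∩ (⋃_{i=1}^q {x ∈ ℝⁿ : (f_i)^∞(x) ≤ 0}) ⊆ S_∞ ⊆ K_∞ such that SOL^w(S_∞, f^∞) = {0}, then SOL^s(K, f) is nonempty and bounded. -/
open Filter Topology MvPolynomial Bornology

noncomputable section

/-!
Along an asymptotic direction the leading form takes over: if `x k ∈ A`, `t k → ∞` and
`x k / t k → v`, then `p (x k) / t k ^ deg p → p^∞ v`, so every direction `v` of a sublevel set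
`{p ≤ c}` has `p^∞ v ≤ 0`. As `f^∞ 0 = 0` and `SOL^w(S_∞, f^∞) = {0}`, every `w ≠ 0` in `S_∞` has
`f_i^∞ w > 0` for all `i`: otherwise some `z ∈ S_∞` beats `w`, and a Pareto point of `f^∞` on the
(compact) sublevel set of `z` in `S_∞` would have to be `0`, with `f_i^∞ 0 = 0 > f_i^∞ z`.
Hence `K_∞ ∩ {f_i^∞ ≤ 0} = {0}`, i.e. every sublevel set `{x ∈ K | f_i x ≤ c}` is bounded.
A minimizer of `∑ i, f_i` on the compact set `{x ∈ K | f ≤ f x₀}` is Pareto efficient, and every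
Pareto efficient point lies in the bounded set `⋃ i, {x ∈ K | f_i x ≤ f_i x₀}`.
-/

namespace MvPolynomial

variable {σ R : Type*}

theorem IsHomogeneous.eval_smul_s14 [CommSemiring R] {φ : MvPolynomial σ R} {m : ℕ}
    (hφ : φ.IsHomogeneous m) (r : R) (x : σ → R) :
    eval (r • x) φ = r ^ m * eval x φ := by
  rw [eval_eq, eval_eq, Finset.mul_sum]
  refine Finset.sum_congr rfl fun d hd => ?_
  simp only [Pi.smul_apply, smul_eq_mul, mul_pow, Finset.prod_mul_distrib,
    Finset.prod_pow_eq_pow_sum, ← hφ.degree_eq_sum_deg_support hd]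
  ring

theorem IsHomogeneous.eval_zero [CommSemiring R] {φ : MvPolynomial σ R} {m : ℕ}
    (hφ : φ.IsHomogeneous m) (hm : m ≠ 0) : eval 0 φ = 0 := by
  simpa [zero_pow hm] using hφ.eval_smul_s14 0 0

variable {ι : Type*} {l : Filter ι}

theorem IsHomogeneous.tendsto_eval_div_pow {φ : MvPolynomial σ ℝ} {m : ℕ}
    (hφ : φ.IsHomogeneous m) {t : ι → ℝ} {x : ι → σ → ℝ} {v : σ → ℝ}
    (ht : ∀ᶠ k in l, t k ≠ 0) (hx : Tendsto (fun k => (t k)⁻¹ • x k) l (𝓝 v)) :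
    Tendsto (fun k => eval (x k) φ / t k ^ m) l (𝓝 (eval v φ)) := by
  refine (((continuous_eval φ).tendsto v).comp hx).congr' ?_
  filter_upwards [ht] with k hk
  simp [hφ.eval_smul_s14, div_eq_inv_mul]

end MvPolynomial

theorem recPoly_zero {n : ℕ} {p : MvPolynomial (Fin n) ℝ} (hp : 0 < p.totalDegree) :
    recPoly p 0 = 0 :=
  (homogeneousComponent_isHomogeneous _ p).eval_zero hp.ne'

theorem continuous_recPoly {n : ℕ} (p : MvPolynomial (Fin n) ℝ) : Continuous (recPoly p) :=
  continuous_eval _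

theorem tendsto_eval_div_pow_totalDegree {n : ℕ} {ι : Type*} {l : Filter ι}
    (p : MvPolynomial (Fin n) ℝ) {t : ι → ℝ} {x : ι → Fin n → ℝ} {v : Fin n → ℝ}
    (ht : Tendsto t l atTop) (hx : Tendsto (fun k => (t k)⁻¹ • x k) l (𝓝 v)) :
    Tendsto (fun k => eval (x k) p / t k ^ p.totalDegree) l (𝓝 (recPoly p v)) := by
  set d := p.totalDegree
  have ht0 : ∀ᶠ k in l, t k ≠ 0 := ht.eventually_ne_atTop 0
  have hcomp (e : ℕ) := (homogeneousComponent_isHomogeneous e p).tendsto_eval_div_pow ht0 hx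
  have hlow : ∀ e ∈ Finset.range d,
      Tendsto (fun k => eval (x k) (homogeneousComponent e p) / t k ^ d) l (𝓝 0) := by
    intro e he
    obtain ⟨j, hj⟩ : ∃ j, d = e + (j + 1) := ⟨d - e - 1, by grind⟩
    rw [hj]
    have hinv : Tendsto (fun k => (t k)⁻¹ ^ (j + 1)) l (𝓝 0) := by
      simpa using (tendsto_inv_atTop_zero.comp ht).pow (j + 1)
    have h0 := hinv.mul (hcomp e)
    rw [zero_mul] at h0
    refine h0.congr' ?_
    filter_upwards [ht0] with k hk
    rw [inv_pow]
    field_simp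
    ring
  have hsplit : ∀ k, eval (x k) p / t k ^ d = ∑ e ∈ Finset.range d,
      eval (x k) (homogeneousComponent e p) / t k ^ d +
        eval (x k) (homogeneousComponent d p) / t k ^ d := by
    intro k
    conv_lhs => rw [← sum_homogeneousComponent p]
    rw [map_sum, Finset.sum_range_succ, add_div, Finset.sum_div]
  simpa [hsplit, recPoly] using (tendsto_finsetSum _ hlow).add (hcomp d)

theorem nonpos_of_le_of_tendsto_div_pow {ι : Type*} {l : Filter ι} [l.NeBot] {g t : ι → ℝ}
    {c L : ℝ} {d : ℕ} (hd : d ≠ 0) (ht : Tendsto t l atTop) (hg : ∀ᶠ k in l, g k ≤ c)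
    (hlim : Tendsto (fun k => g k / t k ^ d) l (𝓝 L)) : L ≤ 0 := by
  have hc : Tendsto (fun k => c / t k ^ d) l (𝓝 0) :=
    tendsto_const_nhds.div_atTop ((tendsto_pow_atTop hd).comp ht)
  refine le_of_tendsto_of_tendsto hlim hc ?_
  filter_upwards [hg, ht.eventually_gt_atTop 0] with k hgk htk
  exact div_le_div_of_nonneg_right hgk (by positivity)

section AsymptoticCone

variable {n : ℕ}

theorem asymCone_mono {A B : Set (Fin n → ℝ)} (h : A ⊆ B) : asymCone A ⊆ asymCone B :=
  fun _ ⟨t, x, ht, hx, hlim⟩ => ⟨t, x, ht, fun k => h (hx k), hlim⟩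

theorem smul_mem_asymCone {A : Set (Fin n → ℝ)} {w : Fin n → ℝ} (hw : w ∈ asymCone A)
    {r : ℝ} (hr : 0 < r) : r • w ∈ asymCone A := by
  obtain ⟨t, x, ht, hx, hlim⟩ := hw
  refine ⟨fun k => t k / r, x, ht.atTop_div_const hr, hx, ?_⟩
  have h : ∀ k, (t k / r)⁻¹ • x k = r • ((t k)⁻¹ • x k) := fun k => by
    rw [inv_div, div_eq_mul_inv, mul_smul]
  simpa only [h] using hlim.const_smul r

theorem isClosed_asymCone (A : Set (Fin n → ℝ)) : IsClosed (asymCone A) := by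
  refine isClosed_of_closure_subset fun v hv => ?_
  obtain ⟨u, hu, hulim⟩ := mem_closure_iff_seq_limit.1 hv
  -- a diagonal sequence: for each `j`, one term of a sequence witnessing `u j ∈ asymCone A`
  have H : ∀ j : ℕ, ∃ T : ℝ, ∃ X ∈ A, (j : ℝ) ≤ T ∧ dist (T⁻¹ • X) (u j) < 1 / (j + 1) := by
    intro j
    obtain ⟨t, x, ht, hx, hlim⟩ := hu j
    obtain ⟨k, hk1, hk2⟩ := ((ht.eventually_ge_atTop (j : ℝ)).and
      (Metric.tendsto_nhds.1 hlim _ Nat.one_div_pos_of_nat)).exists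
    exact ⟨t k, x k, hx k, hk1, hk2⟩
  choose T X hXA hT hdist using H
  refine ⟨T, X, tendsto_atTop_mono hT tendsto_natCast_atTop_atTop, hXA, ?_⟩
  rw [tendsto_iff_dist_tendsto_zero]
  refine squeeze_zero (fun j => dist_nonneg)
    (fun j => (dist_triangle _ (u j) v).trans (add_le_add (hdist j).le le_rfl)) ?_
  simpa using tendsto_one_div_add_atTop_nhds_zero_nat.add
    (tendsto_iff_dist_tendsto_zero.1 hulim)

theorem asymCone_subset_self {C : Set (Fin n → ℝ)} (hC : IsClosed C)
    (hcone : ∀ x ∈ C, ∀ r : ℝ, 0 < r → r • x ∈ C) : asymCone C ⊆ C := by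
  rintro v ⟨t, x, ht, hx, hlim⟩
  exact hC.mem_of_tendsto hlim
    ((ht.eventually_gt_atTop 0).mono fun k hk => hcone _ (hx k) _ (inv_pos.2 hk))

theorem asymCone_asymCone_subset (A : Set (Fin n → ℝ)) :
    asymCone (asymCone A) ⊆ asymCone A :=
  asymCone_subset_self (isClosed_asymCone A) fun _ hx _ hr => smul_mem_asymCone hx hr

theorem exists_norm_eq_one_mem_asymCone {B : Set (Fin n → ℝ)} (hB : ¬IsBounded B) :
    ∃ v ∈ asymCone B, ‖v‖ = 1 := by
  have h : ∀ k : ℕ, ∃ x ∈ B, (k : ℝ) + 1 ≤ ‖x‖ := by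
    intro k
    by_contra! hk
    exact hB (isBounded_iff_forall_norm_le.2 ⟨_, fun x hx => (hk x hx).le⟩)
  choose z hzB hz using h
  have hz0 : ∀ k, ‖z k‖ ≠ 0 := fun k => (lt_of_lt_of_le (by positivity) (hz k)).ne'
  have hsphere : ∀ k, ‖z k‖⁻¹ • z k ∈ Metric.sphere (0 : Fin n → ℝ) 1 := fun k => by
    rw [mem_sphere_zero_iff_norm, norm_smul, norm_inv, norm_norm, inv_mul_cancel₀ (hz0 k)]
  obtain ⟨v, hv, φ, hφ, hlim⟩ := (isCompact_sphere (0 : Fin n → ℝ) 1).tendsto_subseq hsphere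
  have hnorm : Tendsto (fun k => ‖z k‖) atTop atTop :=
    tendsto_atTop_mono (fun k => (le_add_of_nonneg_right zero_le_one).trans (hz k))
      tendsto_natCast_atTop_atTop
  exact ⟨v, ⟨_, z ∘ φ, hnorm.comp hφ.tendsto_atTop, fun k => hzB _, hlim⟩,
    mem_sphere_zero_iff_norm.1 hv⟩

end AsymptoticCone

theorem recPoly_nonpos_of_mem_asymCone {n : ℕ} {p : MvPolynomial (Fin n) ℝ}
    (hp : 0 < p.totalDegree) {c : ℝ} {v : Fin n → ℝ}
    (hv : v ∈ asymCone {x | eval x p ≤ c}) : recPoly p v ≤ 0 := by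
  obtain ⟨t, x, ht, hx, hlim⟩ := hv
  exact nonpos_of_le_of_tendsto_div_pow hp.ne' ht (Eventually.of_forall hx)
    (tendsto_eval_div_pow_totalDegree p ht hlim)

theorem MvPolynomial.IsHomogeneous.eval_nonpos_of_mem_asymCone {n m : ℕ}
    {φ : MvPolynomial (Fin n) ℝ} (hφ : φ.IsHomogeneous m) (hm : m ≠ 0) {c : ℝ}
    {v : Fin n → ℝ} (hv : v ∈ asymCone {x | eval x φ ≤ c}) : eval v φ ≤ 0 := by
  obtain ⟨t, x, ht, hx, hlim⟩ := hv
  exact nonpos_of_le_of_tendsto_div_pow hm ht (Eventually.of_forall hx)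
    (hφ.tendsto_eval_div_pow (ht.eventually_ne_atTop 0) hlim)

section Pareto

variable {n q : ℕ} {C : Set (Fin n → ℝ)} {g : Fin q → (Fin n → ℝ) → ℝ}

theorem nonempty_fin_of_mem_SOLw {x : Fin n → ℝ} (hx : x ∈ SOLw C g) : Nonempty (Fin q) := by
  by_contra! h
  exact hx.2 ⟨x, hx.1, isEmptyElim⟩

theorem SOLs_subset_SOLw [Nonempty (Fin q)] : SOLs C g ⊆ SOLw C g := by
  rintro x ⟨hxC, hx⟩
  refine ⟨hxC, fun ⟨y, hyC, hy⟩ => hx ⟨y, hyC, fun i => (hy i).le, ?_⟩⟩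
  exact ⟨Classical.arbitrary _, (hy _).ne⟩

theorem SOLs_subset_iUnion_sublevel [Nonempty (Fin q)] {x₀ : Fin n → ℝ} (hx₀ : x₀ ∈ C) :
    SOLs C g ⊆ ⋃ i, {x | x ∈ C ∧ g i x ≤ g i x₀} := by
  rintro x ⟨hxC, hx⟩
  by_contra h
  have hlt : ∀ i, g i x₀ < g i x := fun i => not_le.1 fun hi => h (Set.mem_iUnion.2 ⟨i, hxC, hi⟩)
  exact hx ⟨x₀, hx₀, fun i => (hlt i).le, ⟨Classical.arbitrary _, (hlt _).ne⟩⟩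

theorem exists_mem_SOLs_le (hC : IsClosed C) (hg : ∀ i, Continuous (g i))
    {x₀ : Fin n → ℝ} (hx₀ : x₀ ∈ C) (hbdd : IsBounded {x | x ∈ C ∧ ∀ i, g i x ≤ g i x₀}) :
    ∃ x ∈ SOLs C g, ∀ i, g i x ≤ g i x₀ := by
  set L := {x | x ∈ C ∧ ∀ i, g i x ≤ g i x₀}
  have hLcl : IsClosed L := by
    simpa only [L, Set.ofPred_and, Set.ofPred_forall, Set.ofPred_mem_eq] using
      hC.inter (isClosed_iInter fun i => isClosed_le (hg i) continuous_const)
  obtain ⟨x, ⟨hxC, hxL⟩, hmin⟩ :=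
    (Metric.isCompact_of_isClosed_isBounded hLcl hbdd).exists_isMinOn ⟨x₀, hx₀, fun i => le_rfl⟩
      (continuous_finsetSum Finset.univ fun i _ => hg i).continuousOn
  refine ⟨x, ⟨hxC, fun ⟨y, hyC, hle, i, hne⟩ => ?_⟩, hxL⟩
  have hyL : y ∈ L := ⟨hyC, fun j => (hle j).trans (hxL j)⟩
  exact (hmin hyL).not_gt
    (Finset.sum_lt_sum (fun j _ => hle j) ⟨i, Finset.mem_univ _, (hle i).lt_of_ne hne⟩)

theorem exists_pos_of_SOLw_eq_singleton_zero (hg0 : ∀ i, g i 0 = 0) (hC : SOLw C g = {0})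
    {w : Fin n → ℝ} (hw : w ∈ C) (hw0 : w ≠ 0) : ∃ i, 0 < g i w := by
  have h0 : (0 : Fin n → ℝ) ∈ SOLw C g := hC ▸ rfl
  have hw' : w ∉ SOLw C g := hC ▸ hw0
  obtain ⟨z, hzC, hz⟩ : ∃ z ∈ C, ∀ i, g i z < g i w := by
    by_contra h
    exact hw' ⟨hw, h⟩
  by_contra! hneg
  exact h0.2 ⟨z, hzC, fun i => (hz i).trans_le ((hneg i).trans (hg0 i).ge)⟩

end Pareto

section Recession

variable {n q : ℕ} {S : Set (Fin n → ℝ)} {f : Fin q → MvPolynomial (Fin n) ℝ}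

theorem isBounded_asymCone_inter_recPoly_sublevel (hdeg : ∀ i, 0 < (f i).totalDegree)
    (hS : SOLw (asymCone S) (fun i => recPoly (f i)) = {0}) (c : Fin q → ℝ) :
    IsBounded {x | x ∈ asymCone S ∧ ∀ i, recPoly (f i) x ≤ c i} := by
  by_contra hB
  obtain ⟨v, hv, hv1⟩ := exists_norm_eq_one_mem_asymCone hB
  have hvS : v ∈ asymCone S := asymCone_asymCone_subset S (asymCone_mono (fun _ hx => hx.1) hv)
  have hvle : ∀ i, recPoly (f i) v ≤ 0 := fun i =>
    (homogeneousComponent_isHomogeneous _ _).eval_nonpos_of_mem_asymCone (hdeg i).ne'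
      (asymCone_mono (fun _ hx => hx.2 i) hv)
  obtain ⟨i, hi⟩ := exists_pos_of_SOLw_eq_singleton_zero (fun i => recPoly_zero (hdeg i)) hS hvS
    (norm_ne_zero_iff.1 (hv1 ▸ one_ne_zero))
  exact (hvle i).not_gt hi

theorem recPoly_pos_of_mem_asymCone (hdeg : ∀ i, 0 < (f i).totalDegree)
    (hS : SOLw (asymCone S) (fun i => recPoly (f i)) = {0}) {w : Fin n → ℝ}
    (hw : w ∈ asymCone S) (hw0 : w ≠ 0) (i : Fin q) : 0 < recPoly (f i) w := by
  by_contra! hi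
  have : Nonempty (Fin q) := nonempty_fin_of_mem_SOLw (hS.ge (Set.mem_singleton 0))
  obtain ⟨z, hzS, hzw⟩ : ∃ z ∈ asymCone S, ∀ j, recPoly (f j) z < recPoly (f j) w := by
    by_contra h
    exact hw0 (hS ▸ ⟨hw, h⟩ : w ∈ ({0} : Set (Fin n → ℝ)))
  obtain ⟨x, hx, hxz⟩ := exists_mem_SOLs_le (isClosed_asymCone S) (fun j => continuous_recPoly _)
    hzS (isBounded_asymCone_inter_recPoly_sublevel hdeg hS _)
  have hx0 : x = 0 := hS.le (SOLs_subset_SOLw hx)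
  have := hxz i
  rw [hx0, recPoly_zero (hdeg i)] at this
  exact (this.trans_lt (hzw i)).not_ge hi

theorem isBounded_sublevel_of_SOLw_asymCone_eq_singleton_zero {K : Set (Fin n → ℝ)}
    (hdeg : ∀ i, 0 < (f i).totalDegree)
    (hS : SOLw (asymCone S) (fun i => recPoly (f i)) = {0})
    (hKS : asymCone K ∩ (⋃ i, {x | recPoly (f i) x ≤ 0}) ⊆ asymCone S) (i : Fin q) (c : ℝ) :
    IsBounded {x | x ∈ K ∧ eval x (f i) ≤ c} := by
  by_contra hB
  obtain ⟨v, hv, hv1⟩ := exists_norm_eq_one_mem_asymCone hB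
  have hvle : recPoly (f i) v ≤ 0 :=
    recPoly_nonpos_of_mem_asymCone (hdeg i) (asymCone_mono (fun _ hx => hx.2) hv)
  have hvS : v ∈ asymCone S :=
    hKS ⟨asymCone_mono (fun _ hx => hx.1) hv, Set.mem_iUnion.2 ⟨i, hvle⟩⟩
  exact hvle.not_gt
    (recPoly_pos_of_mem_asymCone hdeg hS hvS (norm_ne_zero_iff.1 (hv1 ▸ one_ne_zero)) i)

end Recession

theorem stmt14 {n q : ℕ} (K : Set (Fin n → ℝ)) (hKne : K.Nonempty) (hKcl : IsClosed K)
    (f : Fin q → MvPolynomial (Fin n) ℝ) (hdeg : ∀ i, 1 ≤ (f i).totalDegree)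
    (hS : ∃ S : Set (Fin n → ℝ), IsClosed S ∧
      asymCone K ∩ (⋃ i, {x | recPoly (f i) x ≤ 0}) ⊆ asymCone S ∧
      asymCone S ⊆ asymCone K ∧
      SOLw (asymCone S) (fun i => recPoly (f i)) = {0}) :
    (SOLs K (fun i x => eval x (f i))).Nonempty ∧
      Bornology.IsBounded (SOLs K (fun i x => eval x (f i))) := by
  obtain ⟨S, -, hKS, -, hS⟩ := hS
  have : Nonempty (Fin q) := nonempty_fin_of_mem_SOLw (hS.ge (Set.mem_singleton 0))
  obtain ⟨x₀, hx₀⟩ := hKne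
  have hbdd := isBounded_sublevel_of_SOLw_asymCone_eq_singleton_zero hdeg hS hKS
  obtain ⟨x, hx, -⟩ := exists_mem_SOLs_le hKcl (fun i => continuous_eval (f i)) hx₀
    ((hbdd (Classical.arbitrary _) _).subset fun _ hy => ⟨hy.1, hy.2 _⟩)
  exact ⟨⟨x, hx⟩, (isBounded_iUnion.2 fun i => hbdd i _).subset (SOLs_subset_iUnion_sublevel hx₀)⟩
end
end
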